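/- Let G = (V,E) be a loopless directed graph on [n] with P(G) = {v : top(G_v) = v}, and suppose |P(G)| = n (all vertices are selected). Then Δ(G) = n − 1, every vertex has indegree at least n − 2, and every vertex v ≠ top(G) has an edge to top(G). -/

import Mathlib

open Finset

abbrev Edges (n : ℕ) := Finset (Fin n × Fin n)

/-- No self-loops. -/
def Loopless {n : ℕ} (E : Edges n) : Prop := ∀ e ∈ E, e.1 ≠ e.2

/-- Indegree of `v`. -/
def indeg {n : ℕ} (E : Edges n) (v : Fin n) : ℕ :=
  (E.filter (fun e => e.2 = v)).card

/-- Outdegree of `v`. -/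
def outdeg {n : ℕ} (E : Edges n) (v : Fin n) : ℕ :=
  (E.filter (fun e => e.1 = v)).card

/-- Maximum indegree Δ(G). -/
def maxIndeg {n : ℕ} (E : Edges n) : ℕ :=
  Finset.univ.sup (indeg E)

/-- Remove all outgoing edges of `v` (the graph `G_v`). -/
def removeOut {n : ℕ} (E : Edges n) (v : Fin n) : Edges n :=
  E.filter (fun e => e.1 ≠ v)

/-- Lexicographic comparison of pairs (indegree, index). -/
def lexLt {n : ℕ} (E : Edges n) (u v : Fin n) : Prop :=
  indeg E u < indeg E v ∨ (indeg E u = indeg E v ∧ u < v)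

/-- `v` is selected by asymmetric plurality with runners-up: `top(G_v) = v`,
i.e. `v` lex-dominates every other vertex in `G_v`. -/
def selected {n : ℕ} (E : Edges n) (v : Fin n) : Prop :=
  ∀ w, w ≠ v → lexLt (removeOut E v) w v

open Classical in
/-- The selected set `P(G)`. -/
noncomputable def P {n : ℕ} (E : Edges n) : Finset (Fin n) :=
  Finset.univ.filter (fun v => selected E v)

lemma removeOut_filter {n : ℕ} (E : Edges n) (v w : Fin n) :
    (removeOut E v).filter (fun e => e.2 = w)
      = (E.filter (fun e => e.2 = w)).erase (v, w) := by
  ext ⟨a, b⟩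
  simp only [removeOut, Finset.mem_filter, Finset.mem_erase, Finset.filter_filter,
    Prod.mk.injEq, ne_eq, not_and]
  tauto

lemma indeg_removeOut_of_not_mem {n : ℕ} {E : Edges n} {v w : Fin n}
    (h : (v, w) ∉ E) : indeg (removeOut E v) w = indeg E w := by
  unfold indeg
  rw [removeOut_filter, Finset.erase_eq_of_notMem (by simp [h])]

lemma indeg_removeOut_of_mem {n : ℕ} {E : Edges n} {v w : Fin n}
    (h : (v, w) ∈ E) : indeg (removeOut E v) w + 1 = indeg E w := by
  unfold indeg
  rw [removeOut_filter, Finset.card_erase_of_mem (by simp [h])]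
  have : 0 < (E.filter (fun e => e.2 = w)).card :=
    Finset.card_pos.mpr ⟨(v, w), by simp [h]⟩
  omega

lemma indeg_removeOut_self {n : ℕ} {E : Edges n} (hE : Loopless E) (v : Fin n) :
    indeg (removeOut E v) v = indeg E v := by
  apply indeg_removeOut_of_not_mem
  intro h
  exact hE _ h rfl

lemma indeg_le {n : ℕ} {E : Edges n} (hE : Loopless E) (w : Fin n) :
    indeg E w ≤ n - 1 := by
  have : indeg E w ≤ (Finset.univ.erase w).card := by
    apply Finset.card_le_card_of_injOn (fun e => e.1)
    · intro e he
      simp only [Finset.mem_coe, Finset.mem_filter] at he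
      simp only [Finset.mem_coe, Finset.mem_erase, Finset.mem_univ, and_true]
      exact he.2 ▸ hE _ he.1
    · intro e₁ h₁ e₂ h₂ h
      simp only [Finset.mem_coe, Finset.mem_filter] at h₁ h₂
      exact Prod.ext h (h₁.2.trans h₂.2.symm)
  simpa [Finset.card_erase_of_mem, Fintype.card_fin] using this

/-- Every vertex other than the top must send an edge to the top. -/
lemma edge_to_top {n : ℕ} {E : Edges n} (hsel : ∀ v, selected E v)
    (t : Fin n) (ht1 : indeg E t = maxIndeg E)
    (ht2 : ∀ w : Fin n, indeg E w = maxIndeg E → w ≤ t)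
    (v : Fin n) (hvt : v ≠ t) : (v, t) ∈ E := by
  by_contra h
  have hlex := hsel v t (Ne.symm hvt)
  rw [lexLt] at hlex
  rw [indeg_removeOut_of_not_mem h] at hlex
  have hvle : indeg (removeOut E v) v ≤ indeg E v := by
    by_cases hvv : (v, v) ∈ E
    · have := indeg_removeOut_of_mem hvv; omega
    · rw [indeg_removeOut_of_not_mem hvv]
  have hmax : indeg E v ≤ maxIndeg E := Finset.le_sup (Finset.mem_univ v)
  rcases hlex with h1 | ⟨h1, h2⟩
  · omega
  · have : indeg E v = maxIndeg E := by omega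
    exact absurd h2 (not_lt.mpr (ht2 v this))

/-- If all n vertices are selected, then Δ(G) = n−1, every indegree is at
least n−2, and every vertex other than top(G) has an edge to top(G). -/
theorem stmt_16 {n : ℕ} (E : Edges n) (hE : Loopless E)
    (hall : (P E).card = n) :
    maxIndeg E = n - 1 ∧
    (∀ v : Fin n, n - 2 ≤ indeg E v) ∧
    (∀ t : Fin n, indeg E t = maxIndeg E →
      (∀ w : Fin n, indeg E w = maxIndeg E → w ≤ t) →
      ∀ v : Fin n, v ≠ t → (v, t) ∈ E) := by
  classical
  have hPuniv : P E = Finset.univ :=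
    Finset.eq_univ_of_card _ (by simpa [Fintype.card_fin] using hall)
  have hsel : ∀ v, selected E v := by
    intro v
    have hv : v ∈ P E := hPuniv ▸ Finset.mem_univ v
    simpa [P] using hv
  rcases Nat.eq_zero_or_pos n with hn | hn
  · subst hn
    refine ⟨?_, fun v => v.elim0, fun t => t.elim0⟩
    simp [maxIndeg]
  -- n ≥ 1 : pick the top vertex
  have huniv : (Finset.univ : Finset (Fin n)).Nonempty := by
    have : Nonempty (Fin n) := ⟨⟨0, hn⟩⟩
    exact Finset.univ_nonempty
  obtain ⟨m, _, hm⟩ := Finset.exists_mem_eq_sup Finset.univ huniv (indeg E)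
  have hAne : (Finset.univ.filter (fun v => indeg E v = maxIndeg E)).Nonempty :=
    ⟨m, Finset.mem_filter.mpr ⟨Finset.mem_univ _, hm.symm⟩⟩
  set t := (Finset.univ.filter (fun v => indeg E v = maxIndeg E)).max' hAne with htdef
  have ht1 : indeg E t = maxIndeg E := by
    have := Finset.max'_mem _ hAne
    simpa using this
  have ht2 : ∀ w : Fin n, indeg E w = maxIndeg E → w ≤ t := by
    intro w hw
    exact Finset.le_max' _ w (by simp [hw])
  have hedges : ∀ v : Fin n, v ≠ t → (v, t) ∈ E :=
    edge_to_top hsel t ht1 ht2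
  -- indeg t ≥ n - 1
  have hsub : (Finset.univ.erase t).image (fun v => (v, t)) ⊆
      E.filter (fun e => e.2 = t) := by
    intro e he
    simp only [Finset.mem_image, Finset.mem_erase, Finset.mem_univ, and_true] at he
    obtain ⟨v, hv, rfl⟩ := he
    simp [hedges v hv]
  have hge : n - 1 ≤ indeg E t := by
    have hcard : ((Finset.univ.erase t).image (fun v => (v, t))).card = n - 1 := by
      rw [Finset.card_image_of_injective _ (fun a b h => by
        simpa using (Prod.mk.injEq a t b t).mp h |>.1)]
      simp [Finset.card_erase_of_mem]
    calc n - 1 = ((Finset.univ.erase t).image (fun v => (v, t))).card := hcard.symm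
      _ ≤ (E.filter (fun e => e.2 = t)).card := Finset.card_le_card hsub
      _ = indeg E t := rfl
  have htop : indeg E t = n - 1 := le_antisymm (indeg_le hE t) hge
  have hmaxeq : maxIndeg E = n - 1 := by rw [← ht1, htop]
  refine ⟨hmaxeq, ?_, fun t' ht1' ht2' => edge_to_top hsel t' ht1' ht2'⟩
  intro v
  by_cases hvt : v = t
  · subst hvt; omega
  · have hlex := hsel v t (Ne.symm hvt)
    rw [lexLt] at hlex
    have h1 : indeg (removeOut E v) t + 1 = indeg E t :=
      indeg_removeOut_of_mem (hedges v hvt)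
    rw [indeg_removeOut_self hE] at hlex
    rcases hlex with h2 | ⟨h2, _⟩ <;> omega
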